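/- Let A be a self-adjoint endomorphism of an n-dimensional real inner product space and T_r its r-th Newton transformation. Then trace(A T_r) = (r+1) S_{r+1} for 0 ≤ r ≤ n-1, where S_{r+1} is the (r+1)-th elementary symmetric function of the eigenvalues of A. -/

import Mathlib

open Finset

/-- The `r`-th elementary symmetric polynomial of the values of `x` on the index set `s`
(`s_0 = 1` by convention). -/
noncomputable def esymm {n : ℕ} (s : Finset (Fin n)) (r : ℕ) (x : Fin n → ℝ) : ℝ :=
  ∑ t ∈ s.powersetCard r, ∏ i ∈ t, x i

/-- The Newton transformations of an endomorphism `A`, relative to the invariants `S`: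
`T_0 = I`, `T_r = S_r • I - A ∘ T_{r-1}`. -/
noncomputable def newton {E : Type*} [AddCommGroup E] [Module ℝ E]
    (A : Module.End ℝ E) (S : ℕ → ℝ) : ℕ → Module.End ℝ E
  | 0 => 1
  | r + 1 => S (r + 1) • 1 - A * newton A S r

lemma esymm_rec {n : ℕ} (κ : Fin n → ℝ) (i : Fin n) (r : ℕ) :
    esymm univ (r+1) κ = esymm (univ.erase i) (r+1) κ + κ i * esymm (univ.erase i) r κ := by
  have h : (univ : Finset (Fin n)) = insert i (univ.erase i) := by
    rw [insert_erase (mem_univ i)]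
  unfold esymm
  nth_rewrite 1 [h]
  rw [powersetCard_succ_insert (notMem_erase _ _), sum_union, sum_image, mul_sum]
  · congr 1
    refine sum_congr rfl fun t ht => ?_
    rw [prod_insert]
    exact fun hit => (notMem_erase i univ) ((mem_powersetCard.1 ht).1 hit)
  · intro t ht u hu htu
    have hit : i ∉ t := fun h' => (notMem_erase i univ) ((mem_powersetCard.1 ht).1 h')
    have hiu : i ∉ u := fun h' => (notMem_erase i univ) ((mem_powersetCard.1 hu).1 h')
    rw [← erase_insert hit, htu, erase_insert hiu]
  · rw [disjoint_left]
    intro t ht htu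
    obtain ⟨u, hu, rfl⟩ := mem_image.1 htu
    exact (notMem_erase i univ) ((mem_powersetCard.1 ht).1 (mem_insert_self i u))

lemma sum_esymm_erase {n : ℕ} (κ : Fin n → ℝ) (r : ℕ) :
    ∑ i, κ i * esymm (univ.erase i) r κ = ((r : ℝ) + 1) * esymm univ (r+1) κ := by
  unfold esymm
  have lhs : ∑ i, κ i * ∑ t ∈ (univ.erase i).powersetCard r, ∏ j ∈ t, κ j
      = ∑ i, ∑ t ∈ (univ.erase i).powersetCard r, ∏ j ∈ insert i t, κ j := by
    refine sum_congr rfl fun i _ => ?_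
    rw [mul_sum]
    refine sum_congr rfl fun t ht => ?_
    rw [prod_insert (fun h' => (notMem_erase i univ) ((mem_powersetCard.1 ht).1 h'))]
  rw [lhs]
  have rhs : ((r : ℝ) + 1) * ∑ t ∈ univ.powersetCard (r+1), ∏ j ∈ t, κ j
      = ∑ t ∈ univ.powersetCard (r+1), ∑ i ∈ t, ∏ j ∈ t, κ j := by
    rw [mul_sum]
    refine sum_congr rfl fun t ht => ?_
    rw [sum_const, (mem_powersetCard.1 ht).2, nsmul_eq_mul]
    push_cast; ring
  rw [rhs]
  rw [sum_sigma', sum_sigma']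
  refine sum_nbij' (fun p => ⟨insert p.1 p.2, p.1⟩) (fun p => ⟨p.2, p.1.erase p.2⟩) ?_ ?_ ?_ ?_ ?_
  · rintro ⟨i, t⟩ hp
    simp only [mem_sigma, mem_univ, true_and] at hp ⊢
    obtain ⟨hsub, hcard⟩ := mem_powersetCard.1 hp
    have hit : i ∉ t := fun h' => (notMem_erase i univ) (hsub h')
    refine ⟨mem_powersetCard.2 ⟨subset_univ _, ?_⟩, mem_insert_self i t⟩
    rw [card_insert_of_notMem hit, hcard]
  · rintro ⟨t, i⟩ hp
    simp only [mem_sigma, mem_univ, true_and] at hp ⊢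
    obtain ⟨ht, hit⟩ := hp
    obtain ⟨-, hcard⟩ := mem_powersetCard.1 ht
    refine mem_powersetCard.2 ⟨fun j hj => mem_erase.2 ⟨(mem_erase.1 hj).1, mem_univ j⟩, ?_⟩
    rw [card_erase_of_mem hit, hcard]; omega
  · rintro ⟨i, t⟩ hp
    simp only [mem_sigma, mem_univ, true_and] at hp
    have hit : i ∉ t := fun h' => (notMem_erase i univ) ((mem_powersetCard.1 hp).1 h')
    simp [erase_insert hit]
  · rintro ⟨t, i⟩ hp
    simp only [mem_sigma, mem_univ, true_and] at hp
    simp [insert_erase hp.2]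
  · rintro ⟨i, t⟩ hp; rfl

lemma esymm_zero {n : ℕ} (s : Finset (Fin n)) (x : Fin n → ℝ) : esymm s 0 x = 1 := by
  simp [esymm]

lemma trace_diag {E : Type*} [NormedAddCommGroup E] [InnerProductSpace ℝ E]
    [FiniteDimensional ℝ E] {n : ℕ} (v : OrthonormalBasis (Fin n) ℝ E)
    (f : Module.End ℝ E) (c : Fin n → ℝ) (hf : ∀ j, f (v j) = c j • v j) :
    LinearMap.trace ℝ E f = ∑ j, c j := by
  rw [LinearMap.trace_eq_matrix_trace ℝ v.toBasis f, Matrix.trace]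
  refine sum_congr rfl fun j _ => ?_
  rw [Matrix.diag_apply, LinearMap.toMatrix_apply, OrthonormalBasis.coe_toBasis, hf j,
    map_smul]
  simp

lemma newton_apply {E : Type*} [NormedAddCommGroup E] [InnerProductSpace ℝ E]
    [FiniteDimensional ℝ E] {n : ℕ} (A : Module.End ℝ E) (κ : Fin n → ℝ)
    (v : OrthonormalBasis (Fin n) ℝ E) (hv : ∀ i, A (v i) = κ i • v i) (i : Fin n) :
    ∀ r, newton A (fun j => esymm univ j κ) r (v i) = esymm (univ.erase i) r κ • v i := by
  intro r
  induction r with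
  | zero => simp [newton, esymm_zero]
  | succ r ih =>
    show ((esymm univ (r+1) κ) • (1 : Module.End ℝ E) - A * newton A _ r) (v i) = _
    rw [LinearMap.sub_apply, LinearMap.smul_apply, Module.End.one_apply, Module.End.mul_apply,
      ih, map_smul, hv i, smul_smul, esymm_rec κ i r, ← sub_smul]
    ring_nf

/-- For a self-adjoint endomorphism `A` of an `n`-dimensional real inner product space with
eigenvalues `κ`, the Newton transformations satisfy `trace (A T_r) = (r+1) S_{r+1}` for
`0 ≤ r ≤ n-1`, where `S_{r+1}` is the `(r+1)`-th elementary symmetric function of the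
eigenvalues. -/
theorem stmt_6 {E : Type*} [NormedAddCommGroup E] [InnerProductSpace ℝ E]
    [FiniteDimensional ℝ E] (n : ℕ) (hdim : Module.finrank ℝ E = n)
    (A : Module.End ℝ E) (hA : LinearMap.IsSymmetric (A : E →ₗ[ℝ] E))
    (κ : Fin n → ℝ) (v : OrthonormalBasis (Fin n) ℝ E)
    (hv : ∀ i, A (v i) = κ i • v i) :
    ∀ r, r + 1 ≤ n →
      LinearMap.trace ℝ E (A * newton A (fun j => esymm univ j κ) r) =
        ((r : ℝ) + 1) * esymm univ (r + 1) κ := by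
  intro r _
  rw [trace_diag v _ (fun j => κ j * esymm (univ.erase j) r κ) (fun j => by
    rw [Module.End.mul_apply, newton_apply A κ v hv j r, map_smul, hv j, smul_smul,
      mul_comm]), sum_esymm_erase κ r]
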